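/- Let x : ℝ → ℝ^n be a curve, V1, V2 : ℝ^n → ℝ, N1, N2 : ℝ^n → ℝ nonnegative functions, and h : ℝ → ℝ nonnegative with h(0) = 0. Let Ω ⊆ ℝ^n be a set containing x(t) for all t ≥ 0, and suppose there is a constant B > 0 such that h(s) ≤ B·s for every s in the image N1(Ω). Suppose that for every t ≥ 0 the maps t ↦ V1(x(t)) and t ↦ V2(x(t)) are differentiable with (d/dt)V1(x(t)) ≤ -N1(x(t)) and (d/dt)V2(x(t)) ≤ -N2(x(t)) + h(N1(x(t))). Then for every δ with 0 < δ < 1/B, setting W := V1 + δ·V2 and γ := min(1 - δ·B, δ), one has γ > 0 and, for all t ≥ 0, (d/dt)W(x(t)) ≤ -γ·(N1(x(t)) + N2(x(t))). In particular, the choice δ = 1/(1+B) gives (d/dt)W(x(t)) ≤ -(1/(1+B))·(N1(x(t)) + N2(x(t))). -/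

import Mathlib

/-!
Differentiate `W = V₁ + δ V₂` along the trajectory. On `Ω` the interaction term is at most
`δ B N₁`, so `W' ≤ -(1 - δB) N₁ - δ N₂`, and both coefficients are at least
`γ = min (1 - δB) δ`, which is positive exactly when `0 < δ < 1/B`. For `δ = 1/(1+B)` the two
coefficients coincide, so `γ = δ`.
-/

open Filter MeasureTheory

theorem min_mul_add_le_mul_add_mul {a b c d : ℝ} (ha : 0 ≤ a) (hb : 0 ≤ b) :
    min c d * (a + b) ≤ c * a + d * b :=
  calc min c d * (a + b) = min c d * a + min c d * b := mul_add _ _ _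
    _ ≤ c * a + d * b :=
      add_le_add (mul_le_mul_of_nonneg_right (min_le_left c d) ha)
        (mul_le_mul_of_nonneg_right (min_le_right c d) hb)

theorem add_mul_le_neg_min_mul {v₁ v₂ a b B δ : ℝ} (ha : 0 ≤ a) (hb : 0 ≤ b) (hδ : 0 ≤ δ)
    (h₁ : v₁ ≤ -a) (h₂ : v₂ ≤ -b + B * a) :
    v₁ + δ * v₂ ≤ -min (1 - δ * B) δ * (a + b) := by
  have hmin := min_mul_add_le_mul_add_mul (c := 1 - δ * B) (d := δ) ha hb
  nlinarith [mul_le_mul_of_nonneg_left h₂ hδ]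

theorem exists_hasDerivAt_add_mul_le {f₁ f₂ : ℝ → ℝ} {v₁ v₂ a b B δ t : ℝ}
    (hf₁ : HasDerivAt f₁ v₁ t) (hf₂ : HasDerivAt f₂ v₂ t)
    (ha : 0 ≤ a) (hb : 0 ≤ b) (hδ : 0 ≤ δ) (h₁ : v₁ ≤ -a) (h₂ : v₂ ≤ -b + B * a) :
    ∃ w', HasDerivAt (fun s => f₁ s + δ * f₂ s) w' t ∧
      w' ≤ -min (1 - δ * B) δ * (a + b) :=
  ⟨_, hf₁.add (hf₂.const_mul δ), add_mul_le_neg_min_mul ha hb hδ h₁ h₂⟩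

theorem one_sub_mul_pos_of_lt_one_div {B δ : ℝ} (hB : 0 < B) (hδB : δ < 1 / B) :
    0 < 1 - δ * B := by
  rw [lt_div_iff₀ hB] at hδB
  linarith

theorem min_one_sub_one_div_one_add_mul {B : ℝ} (hB : 1 + B ≠ 0) :
    min (1 - 1 / (1 + B) * B) (1 / (1 + B)) = 1 / (1 + B) := by
  have hcoeff : 1 - 1 / (1 + B) * B = 1 / (1 + B) := by
    field_simp
    ring
  rw [hcoeff, min_self]

theorem stmt_2_general {n : ℕ} (x : ℝ → EuclideanSpace ℝ (Fin n))
    (V1 V2 N1 N2 : EuclideanSpace ℝ (Fin n) → ℝ)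
    (h : ℝ → ℝ)
    (hN1 : ∀ y, 0 ≤ N1 y) (hN2 : ∀ y, 0 ≤ N2 y)
    (Ω : Set (EuclideanSpace ℝ (Fin n)))
    (hΩ : ∀ t, 0 ≤ t → x t ∈ Ω)
    (B : ℝ) (hB : 0 < B) (hslope : ∀ s ∈ N1 '' Ω, h s ≤ B * s)
    (v1' v2' : ℝ → ℝ)
    (hd1 : ∀ t, 0 ≤ t → HasDerivAt (fun s => V1 (x s)) (v1' t) t)
    (hd2 : ∀ t, 0 ≤ t → HasDerivAt (fun s => V2 (x s)) (v2' t) t)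
    (hineq1 : ∀ t, 0 ≤ t → v1' t ≤ -N1 (x t))
    (hineq2 : ∀ t, 0 ≤ t → v2' t ≤ -N2 (x t) + h (N1 (x t))) :
    (∀ δ : ℝ, 0 < δ → δ < 1 / B →
      0 < min (1 - δ * B) δ ∧
      ∀ t, 0 ≤ t →
        ∃ w', HasDerivAt (fun s => V1 (x s) + δ * V2 (x s)) w' t ∧
          w' ≤ -(min (1 - δ * B) δ) * (N1 (x t) + N2 (x t))) ∧
    (∀ t, 0 ≤ t →
      ∃ w', HasDerivAt (fun s => V1 (x s) + (1 / (1 + B)) * V2 (x s)) w' t ∧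
        w' ≤ -(1 / (1 + B)) * (N1 (x t) + N2 (x t))) := by
  have hW : ∀ δ : ℝ, 0 < δ → δ < 1 / B →
      0 < min (1 - δ * B) δ ∧
      ∀ t, 0 ≤ t →
        ∃ w', HasDerivAt (fun s => V1 (x s) + δ * V2 (x s)) w' t ∧
          w' ≤ -(min (1 - δ * B) δ) * (N1 (x t) + N2 (x t)) := by
    intro δ hδ hδB
    refine ⟨lt_min (one_sub_mul_pos_of_lt_one_div hB hδB) hδ, fun t ht => ?_⟩
    have hv2 : v2' t ≤ -N2 (x t) + B * N1 (x t) :=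
      (hineq2 t ht).trans (add_le_add_right (hslope _ ⟨x t, hΩ t ht, rfl⟩) _)
    exact exists_hasDerivAt_add_mul_le (hd1 t ht) (hd2 t ht) (hN1 _) (hN2 _) hδ.le
      (hineq1 t ht) hv2
  refine ⟨hW, fun t ht => ?_⟩
  have hδB : 1 / (1 + B) < 1 / B := one_div_lt_one_div_of_lt hB (lt_one_add B)
  have hγ := min_one_sub_one_div_one_add_mul (B := B) (by positivity)
  simpa only [hγ] using (hW (1 / (1 + B)) (by positivity) hδB).2 t ht

theorem stmt_2 {n : ℕ} (x : ℝ → EuclideanSpace ℝ (Fin n))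
    (V1 V2 N1 N2 : EuclideanSpace ℝ (Fin n) → ℝ)
    (h : ℝ → ℝ)
    (hN1 : ∀ y, 0 ≤ N1 y) (hN2 : ∀ y, 0 ≤ N2 y)
    (hh : ∀ r, 0 ≤ h r) (hh0 : h 0 = 0)
    (Ω : Set (EuclideanSpace ℝ (Fin n)))
    (hΩ : ∀ t, 0 ≤ t → x t ∈ Ω)
    (B : ℝ) (hB : 0 < B) (hslope : ∀ s ∈ N1 '' Ω, h s ≤ B * s)
    (v1' v2' : ℝ → ℝ)
    (hd1 : ∀ t, 0 ≤ t → HasDerivAt (fun s => V1 (x s)) (v1' t) t)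
    (hd2 : ∀ t, 0 ≤ t → HasDerivAt (fun s => V2 (x s)) (v2' t) t)
    (hineq1 : ∀ t, 0 ≤ t → v1' t ≤ -N1 (x t))
    (hineq2 : ∀ t, 0 ≤ t → v2' t ≤ -N2 (x t) + h (N1 (x t))) :
    (∀ δ : ℝ, 0 < δ → δ < 1 / B →
      0 < min (1 - δ * B) δ ∧
      ∀ t, 0 ≤ t →
        ∃ w', HasDerivAt (fun s => V1 (x s) + δ * V2 (x s)) w' t ∧
          w' ≤ -(min (1 - δ * B) δ) * (N1 (x t) + N2 (x t))) ∧
    (∀ t, 0 ≤ t →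
      ∃ w', HasDerivAt (fun s => V1 (x s) + (1 / (1 + B)) * V2 (x s)) w' t ∧
        w' ≤ -(1 / (1 + B)) * (N1 (x t) + N2 (x t))) :=
  stmt_2_general x V1 V2 N1 N2 h hN1 hN2 Ω hΩ B hB hslope v1' v2' hd1 hd2 hineq1 hineq2
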